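/- (Variance bound for the Poissonized kernel estimator.) Let Y_1,…,Y_M be independent with Y_i ~ Poisson(n p_{Mi}) and Σ_i p_{Mi} = 1. Let w ≥ 0 and F̃_M(x) = (1/M) Σ_{j=1}^M 1_{[(M/(nk)) Σ_i w((j−i)/k) Y_i ≤ x]}, F̄_M(x) = (1/M) Σ_{j=1}^M 1_{[(1/k) Σ_i w((j−i)/k) M p_{Mi} ≤ x]}. Then E ∫ |F̃_M − F̄_M| dx ≤ √( (M/(nk)) Σ_{ℓ∈ℤ} (1/k) w²(ℓ/k) ). -/

import Mathlib

/-!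
Write `a_j = (M/(nk)) Σ_i w((j-i)/k) Y_i` and `b_j = E a_j = (1/k) Σ_i w((j-i)/k) M p_i`, the jump
points of the `j`-th step functions of `F̃_M` and `F̄_M`. Since
`∫ |1[a ≤ x] - 1[b ≤ x]| dx = |a - b|`, the triangle inequality gives
`∫ |F̃_M - F̄_M| ≤ (1/M) Σ_j |a_j - b_j|`. By Jensen (Cauchy–Schwarz), `E|a_j - b_j| ≤ √Var a_j`,
and by independence, with `Var Y_i = n p_i` (read off the Poisson factorial moments
`E[Y(Y-1)⋯(Y-k+1)] = λ^k`), `Var a_j = (M/(nk))² Σ_i w((j-i)/k)² n p_i`.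
Concavity of `√` moves the average over `j` inside the root; summing over `j` first,
`Σ_j w((j-i)/k)² ≤ Σ_ℓ w(ℓ/k)²`, and `Σ_i p_i = 1` then gives the bound.
-/

open MeasureTheory ProbabilityTheory Finset Real
open scoped NNReal Nat

lemma Nat.cast_sq_eq_descFactorial_two_add_descFactorial_one {R : Type*} [CommRing R] (n : ℕ) :
    (n : R) ^ 2 = n.descFactorial 2 + n.descFactorial 1 := by
  rw [Nat.cast_descFactorial_two]
  simp only [Nat.descFactorial_one]
  ring

namespace ProbabilityTheory

lemma hasSum_poissonMeasure_mul_descFactorial (r : ℝ≥0) (k : ℕ) :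
    HasSum (fun n ↦ exp (-r) * r ^ n / n ! * (n.descFactorial k : ℝ)) (r ^ k) := by
  rw [← hasSum_nat_add_iff' k, Finset.sum_eq_zero fun i hi ↦ by
    simp [Nat.descFactorial_eq_zero_iff_lt.2 (Finset.mem_range.1 hi)], sub_zero]
  have h := (hasSum_one_poissonMeasure r).mul_left ((r : ℝ) ^ k)
  rw [mul_one] at h
  refine h.congr_fun fun n ↦ ?_
  have hfac := Nat.factorial_mul_descFactorial (Nat.le_add_left k n)
  rw [Nat.add_sub_cancel] at hfac
  rw [← hfac]
  have hn : (n ! : ℝ) ≠ 0 := by positivity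
  push_cast
  field_simp
  ring

lemma integrable_descFactorial_poissonMeasure (r : ℝ≥0) (k : ℕ) :
    Integrable (fun n : ℕ ↦ (n.descFactorial k : ℝ)) Po(r) :=
  integrable_poissonMeasure_iff.2 <| by
    simpa using (hasSum_poissonMeasure_mul_descFactorial r k).summable

lemma integral_descFactorial_poissonMeasure (r : ℝ≥0) (k : ℕ) :
    ∫ n, (n.descFactorial k : ℝ) ∂Po(r) = r ^ k := by
  simpa [integral_poissonMeasure] using (hasSum_poissonMeasure_mul_descFactorial r k).tsum_eq

lemma memLp_natCast_poissonMeasure (r : ℝ≥0) : MemLp (fun n : ℕ ↦ (n : ℝ)) 2 Po(r) := by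
  refine (memLp_two_iff_integrable_sq .of_discrete).2 ?_
  simp_rw [Nat.cast_sq_eq_descFactorial_two_add_descFactorial_one]
  exact (integrable_descFactorial_poissonMeasure r 2).add
    (integrable_descFactorial_poissonMeasure r 1)

lemma integral_natCast_poissonMeasure (r : ℝ≥0) : ∫ n, (n : ℝ) ∂Po(r) = r := by
  simpa using integral_descFactorial_poissonMeasure r 1

lemma variance_natCast_poissonMeasure (r : ℝ≥0) : Var[fun n : ℕ ↦ (n : ℝ); Po(r)] = r := by
  rw [variance_eq_sub (memLp_natCast_poissonMeasure r)]
  simp only [Pi.pow_apply, Nat.cast_sq_eq_descFactorial_two_add_descFactorial_one]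
  rw [integral_add (integrable_descFactorial_poissonMeasure r 2)
    (integrable_descFactorial_poissonMeasure r 1), integral_descFactorial_poissonMeasure,
    integral_descFactorial_poissonMeasure, integral_natCast_poissonMeasure]
  ring

variable {Ω : Type*} {mΩ : MeasurableSpace Ω} {P : Measure Ω}

lemma integral_abs_sub_integral_le_sqrt_variance [IsProbabilityMeasure P] {X : Ω → ℝ}
    (hX : MemLp X 2 P) : ∫ ω, |X ω - P[X]| ∂P ≤ √Var[X; P] := by
  have hZ : MemLp (fun ω ↦ X ω - P[X]) 2 P := hX.sub (memLp_const _)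
  have hjensen := strictConcaveOn_sqrt.concaveOn.le_map_integral
    continuous_sqrt.continuousOn isClosed_Ici
    (.of_forall fun ω ↦ Set.mem_Ici.2 (sq_nonneg (X ω - P[X]))) hZ.integrable_sq
    (by simpa [Function.comp_def, sqrt_sq_eq_abs] using (hZ.integrable one_le_two).abs)
  simpa [sqrt_sq_eq_abs, variance_eq_integral hX.aemeasurable] using hjensen

namespace HasLaw

variable {Y : Ω → ℕ} {r : ℝ≥0}

lemma memLp_natCast_of_poisson (hY : HasLaw Y Po(r) P) : MemLp (fun ω ↦ (Y ω : ℝ)) 2 P :=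
  (memLp_map_measure_iff .of_discrete hY.aemeasurable).1
    (hY.map_eq ▸ memLp_natCast_poissonMeasure r)

lemma integral_natCast_of_poisson (hY : HasLaw Y Po(r) P) : P[fun ω ↦ (Y ω : ℝ)] = (r : ℝ) :=
  (hY.integral_comp (f := fun n : ℕ ↦ (n : ℝ)) .of_discrete).trans
    (integral_natCast_poissonMeasure r)

lemma variance_natCast_of_poisson (hY : HasLaw Y Po(r) P) : Var[fun ω ↦ (Y ω : ℝ); P] = r := by
  rw [← variance_natCast_poissonMeasure r, ← hY.map_eq,
    variance_map .of_discrete hY.aemeasurable, Function.comp_def]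

end HasLaw

lemma iIndepFun.pairwise_indepFun_Icc_one {β : Type*} {mβ : MeasurableSpace β} {M : ℕ}
    {Y : ℕ → Ω → β} (h : iIndepFun (fun i : Fin M ↦ Y (i + 1)) P) :
    (Finset.Icc 1 M : Set ℕ).Pairwise fun i j ↦ Y i ⟂ᵢ[P] Y j := by
  intro i hi j hj hij
  simp only [Finset.coe_Icc, Set.mem_Icc] at hi hj
  have hne : (⟨i - 1, by omega⟩ : Fin M) ≠ ⟨j - 1, by omega⟩ := by
    simp only [ne_eq, Fin.mk.injEq]
    omega
  simpa [Nat.sub_add_cancel hi.1, Nat.sub_add_cancel hj.1] using h.indepFun hne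

variable {ι : Type*} {s : Finset ι} {Y : ι → Ω → ℕ} {r : ι → ℝ≥0}

lemma memLp_sum_mul_natCast_of_poisson (hY : ∀ i ∈ s, HasLaw (Y i) Po(r i) P) (c : ι → ℝ) :
    MemLp (fun ω ↦ ∑ i ∈ s, c i * Y i ω) 2 P :=
  memLp_finsetSum s fun i hi ↦ (hY i hi).memLp_natCast_of_poisson.const_mul (c i)

lemma integral_abs_sum_mul_natCast_sub_le_of_poisson [IsProbabilityMeasure P]
    (hY : ∀ i ∈ s, HasLaw (Y i) Po(r i) P)
    (hindep : (s : Set ι).Pairwise fun i j ↦ Y i ⟂ᵢ[P] Y j) (c : ι → ℝ) :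
    ∫ ω, |∑ i ∈ s, c i * Y i ω - ∑ i ∈ s, c i * r i| ∂P ≤ √(∑ i ∈ s, c i ^ 2 * r i) := by
  have hX : ∀ i ∈ s, MemLp (fun ω ↦ c i * Y i ω) 2 P := fun i hi ↦
    (hY i hi).memLp_natCast_of_poisson.const_mul (c i)
  have hmean : P[fun ω ↦ ∑ i ∈ s, c i * Y i ω] = ∑ i ∈ s, c i * r i := by
    rw [integral_finsetSum s fun i hi ↦ (hX i hi).integrable one_le_two]
    refine Finset.sum_congr rfl fun i hi ↦ ?_
    rw [integral_const_mul, (hY i hi).integral_natCast_of_poisson]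
  have hvar : Var[fun ω ↦ ∑ i ∈ s, c i * Y i ω; P] = ∑ i ∈ s, c i ^ 2 * r i := by
    have hsum := IndepFun.variance_sum hX fun i hi j hj hij ↦
      (hindep hi hj hij).comp (measurable_of_countable fun n : ℕ ↦ c i * n)
        (measurable_of_countable fun n : ℕ ↦ c j * n)
    rw [← Finset.sum_fn, hsum]
    refine Finset.sum_congr rfl fun i hi ↦ ?_
    rw [variance_const_mul, (hY i hi).variance_natCast_of_poisson]
  simpa [hmean, hvar] using
    integral_abs_sub_integral_le_sqrt_variance (memLp_sum_mul_natCast_of_poisson hY c)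

end ProbabilityTheory

lemma abs_ite_le_sub_ite_le_eq_indicator (a b x : ℝ) :
    |(if a ≤ x then (1 : ℝ) else 0) - (if b ≤ x then 1 else 0)| =
      (Set.Ico (min a b) (max a b)).indicator 1 x := by
  by_cases ha : a ≤ x <;> by_cases hb : b ≤ x <;> simp [Set.indicator_apply, ha, hb]

lemma integrable_abs_ite_le_sub_ite_le (a b : ℝ) :
    Integrable fun x : ℝ ↦ |(if a ≤ x then (1 : ℝ) else 0) - (if b ≤ x then 1 else 0)| := by
  simp_rw [abs_ite_le_sub_ite_le_eq_indicator]
  exact (integrable_indicator_iff measurableSet_Ico).2 (integrableOn_const measure_Ico_lt_top.ne)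

lemma integral_abs_ite_le_sub_ite_le (a b : ℝ) :
    ∫ x, |(if a ≤ x then (1 : ℝ) else 0) - (if b ≤ x then 1 else 0)| = |a - b| := by
  simp_rw [abs_ite_le_sub_ite_le_eq_indicator]
  rw [integral_indicator_one measurableSet_Ico, Real.volume_real_Ico_of_le min_le_max,
    max_sub_min_eq_abs']

lemma integral_abs_mul_sum_ite_le_sub_le {ι : Type*} (s : Finset ι) (a b : ι → ℝ) {c : ℝ}
    (hc : 0 ≤ c) :
    ∫ x, |c * ∑ j ∈ s, (if a j ≤ x then (1 : ℝ) else 0) - c * ∑ j ∈ s, (if b j ≤ x then 1 else 0)|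
      ≤ c * ∑ j ∈ s, |a j - b j| := by
  have hint := fun j (_ : j ∈ s) ↦ integrable_abs_ite_le_sub_ite_le (a j) (b j)
  calc _ ≤ ∫ x, c * ∑ j ∈ s, |(if a j ≤ x then (1 : ℝ) else 0) - (if b j ≤ x then 1 else 0)| := by
        refine integral_mono_of_nonneg (.of_forall fun x ↦ abs_nonneg _)
          ((integrable_finsetSum s hint).const_mul c) (.of_forall fun x ↦ ?_)
        dsimp only
        rw [← mul_sub, ← Finset.sum_sub_distrib, abs_mul, abs_of_nonneg hc]
        exact mul_le_mul_of_nonneg_left (Finset.abs_sum_le_sum_abs _ _) hc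
    _ = c * ∑ j ∈ s, |a j - b j| := by
        rw [integral_const_mul, integral_finsetSum s hint]
        simp_rw [integral_abs_ite_le_sub_ite_le]

lemma integral_integral_abs_mul_sum_ite_le_sub_le {Ω ι : Type*} {mΩ : MeasurableSpace Ω}
    {P : Measure Ω} (s : Finset ι) (A : ι → Ω → ℝ) (B : ι → ℝ) {c : ℝ} (hc : 0 ≤ c)
    (hint : ∀ j ∈ s, Integrable (fun ω ↦ |A j ω - B j|) P) :
    ∫ ω, (∫ x, |c * ∑ j ∈ s, (if A j ω ≤ x then (1 : ℝ) else 0) -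
        c * ∑ j ∈ s, (if B j ≤ x then 1 else 0)|) ∂P ≤ c * ∑ j ∈ s, ∫ ω, |A j ω - B j| ∂P := by
  calc _ ≤ ∫ ω, c * ∑ j ∈ s, |A j ω - B j| ∂P :=
        integral_mono_of_nonneg (.of_forall fun ω ↦ integral_nonneg fun x ↦ abs_nonneg _)
          ((integrable_finsetSum s hint).const_mul c)
          (.of_forall fun ω ↦ integral_abs_mul_sum_ite_le_sub_le s (A · ω) B hc)
    _ = c * ∑ j ∈ s, ∫ ω, |A j ω - B j| ∂P := by
        rw [integral_const_mul, integral_finsetSum s hint]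

lemma one_div_card_mul_sum_sqrt_le {ι : Type*} (s : Finset ι) {f : ι → ℝ}
    (hf : ∀ i ∈ s, 0 ≤ f i) :
    1 / #s * ∑ i ∈ s, √(f i) ≤ √(1 / #s * ∑ i ∈ s, f i) := by
  have hsum : 0 ≤ ∑ i ∈ s, f i := Finset.sum_nonneg hf
  rw [le_sqrt (by positivity) (by positivity), mul_pow]
  calc (1 / #s : ℝ) ^ 2 * (∑ i ∈ s, √(f i)) ^ 2
      ≤ (1 / #s : ℝ) ^ 2 * (#s * ∑ i ∈ s, f i) := by
        gcongr
        convert sq_sum_le_card_mul_sum_sq (s := s) (f := fun i ↦ √(f i)) using 2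
        exact Finset.sum_congr rfl fun i hi ↦ (sq_sqrt (hf i hi)).symm
    _ = 1 / #s * ∑ i ∈ s, f i := by
        obtain rfl | hs := s.eq_empty_or_nonempty
        · simp
        · have : (#s : ℝ) ≠ 0 := by positivity
          field_simp

lemma sum_sum_comp_sub_mul_le_tsum {f : ℤ → ℝ} (hf : Summable f) (hf0 : ∀ ℓ, 0 ≤ f ℓ)
    {s : Finset ℕ} {q : ℕ → ℝ} (hq0 : ∀ i, 0 ≤ q i) (hq : ∑ i ∈ s, q i = 1) :
    ∑ j ∈ s, ∑ i ∈ s, f (j - i) * q i ≤ ∑' ℓ, f ℓ := by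
  have hcol : ∀ i, ∑ j ∈ s, f (j - i) ≤ ∑' ℓ, f ℓ := fun i ↦ by
    rw [← Finset.sum_image fun j _ j' _ h ↦ by omega]
    exact hf.sum_le_tsum _ fun ℓ _ ↦ hf0 ℓ
  calc ∑ j ∈ s, ∑ i ∈ s, f (j - i) * q i = ∑ i ∈ s, q i * ∑ j ∈ s, f (j - i) := by
        rw [Finset.sum_comm]
        simp only [Finset.mul_sum, mul_comm]
    _ ≤ ∑ i ∈ s, q i * ∑' ℓ, f ℓ := by gcongr with i; exacts [hq0 i, hcol i]
    _ = ∑' ℓ, f ℓ := by rw [← Finset.sum_mul, hq, one_mul]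

theorem stmt18_general {Ω : Type*} [MeasureSpace Ω] (P : Measure Ω) [IsProbabilityMeasure P]
    (M n : ℕ) (hM : 0 < M) (hn : 0 < n) (kb : ℝ)
    (w : ℝ → ℝ)
    (hw_sq_summable : Summable (fun ℓ : ℤ => (w ((ℓ : ℝ) / kb)) ^ 2))
    (p : ℕ → NNReal) (hp_sum : ∑ i ∈ Finset.Icc 1 M, p i = 1)
    (Y : ℕ → Ω → ℕ) (hmeas : ∀ i, Measurable (Y i))
    (hindep : iIndepFun (fun i : Fin M => Y (i + 1)) P)
    (hpois : ∀ i ∈ Finset.Icc 1 M,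
      Measure.map (Y i) P = poissonMeasure ((n : NNReal) * p i))
    (Ftilde : Ω → ℝ → ℝ) (Fbar : ℝ → ℝ)
    (hFtilde : ∀ ω x, Ftilde ω x = (1 / M : ℝ) * ∑ j ∈ Finset.Icc 1 M,
      (if (M : ℝ) / ((n : ℝ) * kb) *
          ∑ i ∈ Finset.Icc 1 M, w (((j : ℝ) - (i : ℝ)) / kb) * (Y i ω : ℝ) ≤ x
        then (1 : ℝ) else 0))
    (hFbar : ∀ x, Fbar x = (1 / M : ℝ) * ∑ j ∈ Finset.Icc 1 M,
      (if (1 / kb) *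
          ∑ i ∈ Finset.Icc 1 M, w (((j : ℝ) - (i : ℝ)) / kb) * ((M : ℝ) * (p i : ℝ)) ≤ x
        then (1 : ℝ) else 0)) :
    ∫ ω, (∫ x : ℝ, |Ftilde ω x - Fbar x|) ∂P ≤
      Real.sqrt ((M : ℝ) / ((n : ℝ) * kb) *
        ∑' ℓ : ℤ, (1 / kb) * (w ((ℓ : ℝ) / kb)) ^ 2) := by
  set s := Finset.Icc 1 M
  set c : ℝ := M / (n * kb)
  let a (j : ℕ) (ω : Ω) : ℝ := ∑ i ∈ s, c * w ((j - i) / kb) * Y i ω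
  let b (j : ℕ) : ℝ := ∑ i ∈ s, c * w ((j - i) / kb) * ((n * p i : ℝ≥0) : ℝ)
  let V (j : ℕ) : ℝ := ∑ i ∈ s, (c * w ((j - i) / kb)) ^ 2 * ((n * p i : ℝ≥0) : ℝ)
  have hc : c * n = M / kb := by
    rw [div_mul_eq_mul_div, mul_comm (n : ℝ) kb, mul_div_mul_right _ _ (by positivity)]
  have hFa : ∀ ω x, Ftilde ω x = 1 / M * ∑ j ∈ s, if a j ω ≤ x then 1 else 0 := by
    intro ω x
    simp only [hFtilde, a, Finset.mul_sum, mul_assoc]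
  have hFb : ∀ x, Fbar x = 1 / M * ∑ j ∈ s, if b j ≤ x then 1 else 0 := by
    have hb : ∀ j : ℕ, 1 / kb * ∑ i ∈ s, w ((j - i) / kb) * (M * p i) = b j := fun j ↦ by
      rw [Finset.mul_sum]
      refine Finset.sum_congr rfl fun i _ ↦ ?_
      push_cast
      linear_combination -(w ((j - i) / kb) * p i) * hc
    simp only [hFbar, hb, implies_true]
  have hlaw : ∀ i ∈ s, HasLaw (Y i) Po(n * p i) P := fun i hi ↦
    ⟨(hmeas i).aemeasurable, hpois i hi⟩
  have hdev : ∀ j, ∫ ω, |a j ω - b j| ∂P ≤ √(V j) := fun j ↦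
    integral_abs_sum_mul_natCast_sub_le_of_poisson hlaw hindep.pairwise_indepFun_Icc_one _
  have hint : ∀ j ∈ s, Integrable (fun ω ↦ |a j ω - b j|) P := fun j _ ↦
    ((memLp_sum_mul_natCast_of_poisson hlaw _).integrable one_le_two).sub
      (integrable_const _) |>.abs
  have hV : 1 / M * ∑ j ∈ s, V j ≤ c * ∑' ℓ : ℤ, 1 / kb * w (ℓ / kb) ^ 2 := by
    have hconv := sum_sum_comp_sub_mul_le_tsum hw_sq_summable (fun ℓ ↦ sq_nonneg _)
      (fun i ↦ (p i).2) (by exact_mod_cast hp_sum : ∑ i ∈ s, (p i : ℝ) = 1)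
    push_cast at hconv
    calc 1 / M * ∑ j ∈ s, V j
        = c ^ 2 * n / M * ∑ j ∈ s, ∑ i ∈ s, w ((j - i) / kb) ^ 2 * p i := by
          simp only [V, Finset.mul_sum]
          refine Finset.sum_congr rfl fun j _ ↦ Finset.sum_congr rfl fun i _ ↦ ?_
          push_cast
          ring
      _ ≤ c ^ 2 * n / M * ∑' ℓ : ℤ, w (ℓ / kb) ^ 2 := by gcongr; exact hconv
      _ = c * ∑' ℓ : ℤ, 1 / kb * w (ℓ / kb) ^ 2 := by
          rw [tsum_mul_left, sq, mul_assoc, hc]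
          field_simp
  calc ∫ ω, (∫ x, |Ftilde ω x - Fbar x|) ∂P
      ≤ 1 / M * ∑ j ∈ s, ∫ ω, |a j ω - b j| ∂P := by
        simp only [hFa, hFb]
        exact integral_integral_abs_mul_sum_ite_le_sub_le s a b (by positivity) hint
    _ ≤ 1 / M * ∑ j ∈ s, √(V j) := by gcongr with j; exact hdev j
    _ ≤ √(1 / M * ∑ j ∈ s, V j) := by
        simpa [s] using one_div_card_mul_sum_sqrt_le s (f := V) fun j _ ↦ by positivity
    _ ≤ _ := sqrt_le_sqrt hV

/-- Variance bound for the Poissonized kernel estimator: for independent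
`Y_i ~ Poisson(n p_i)` with `Σ_i p_i = 1` and a nonnegative kernel `w`,
`E ∫ |F̃_M − F̄_M| dx ≤ √((M/(nk)) Σ_{ℓ∈ℤ} (1/k) w(ℓ/k)²)`. -/
theorem stmt18 {Ω : Type*} [MeasureSpace Ω] (P : Measure Ω) [IsProbabilityMeasure P]
    (M n : ℕ) (hM : 0 < M) (hn : 0 < n) (kb : ℝ) (hkb : 0 < kb)
    (w : ℝ → ℝ) (hw_nonneg : ∀ u, 0 ≤ w u)
    (hw_sq_summable : Summable (fun ℓ : ℤ => (w ((ℓ : ℝ) / kb)) ^ 2))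
    (p : ℕ → NNReal) (hp_sum : ∑ i ∈ Finset.Icc 1 M, p i = 1)
    (Y : ℕ → Ω → ℕ) (hmeas : ∀ i, Measurable (Y i))
    (hindep : iIndepFun (fun i : Fin M => Y (i + 1)) P)
    (hpois : ∀ i ∈ Finset.Icc 1 M,
      Measure.map (Y i) P = poissonMeasure ((n : NNReal) * p i))
    (Ftilde : Ω → ℝ → ℝ) (Fbar : ℝ → ℝ)
    (hFtilde : ∀ ω x, Ftilde ω x = (1 / M : ℝ) * ∑ j ∈ Finset.Icc 1 M,
      (if (M : ℝ) / ((n : ℝ) * kb) *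
          ∑ i ∈ Finset.Icc 1 M, w (((j : ℝ) - (i : ℝ)) / kb) * (Y i ω : ℝ) ≤ x
        then (1 : ℝ) else 0))
    (hFbar : ∀ x, Fbar x = (1 / M : ℝ) * ∑ j ∈ Finset.Icc 1 M,
      (if (1 / kb) *
          ∑ i ∈ Finset.Icc 1 M, w (((j : ℝ) - (i : ℝ)) / kb) * ((M : ℝ) * (p i : ℝ)) ≤ x
        then (1 : ℝ) else 0)) :
    ∫ ω, (∫ x : ℝ, |Ftilde ω x - Fbar x|) ∂P ≤
      Real.sqrt ((M : ℝ) / ((n : ℝ) * kb) *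
        ∑' ℓ : ℤ, (1 / kb) * (w ((ℓ : ℝ) / kb)) ^ 2) :=
  stmt18_general P M n hM hn kb w hw_sq_summable p hp_sum Y hmeas hindep hpois Ftilde Fbar hFtilde
    hFbar
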